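/- arXiv:1302.0580 — 2 statements merged into one kernel-verified Lean document; each statement's English description precedes it below -/
import Mathlib

section
/- There exists an effectively Π⁰₂ equivalence relation U on ℕ such that every effectively Π⁰₂ equivalence relation E on ℕ is computably reducible to U. -/
/-- The `e`-th computably enumerable set: the domain of the `e`-th partial
computable function under the standard numbering. -/
def W (e : ℕ) : Set ℕ :=
  {n | ((Denumerable.ofNat Nat.Partrec.Code e).eval n).Dom}

/-- `E` is computably reducible to `F`. -/
def ComputablyReducible (E F : ℕ → ℕ → Prop) : Prop :=
  ∃ f : ℕ → ℕ, Computable f ∧ ∀ x y, E x y ↔ F (f x) (f y)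

/-- An equivalence relation on ℕ is effectively Π⁰₂. -/
def EffectivelyPi02 (E : ℕ → ℕ → Prop) : Prop :=
  ∃ h : ℕ → ℕ, Computable h ∧
    (∀ n, Equivalence (fun x y => Nat.pair x y ∈ W (h n))) ∧
    ∀ x y, E x y ↔ ∀ n, Nat.pair x y ∈ W (h n)

/-!
An effectively Π⁰₂ equivalence relation is the intersection of the layers
`F n = {(x, y) | ⟨n, ⟨x, y⟩⟩ ∈ W e}` for a single index `e`. The universal relation relates
`⟨e, x⟩` and `⟨e, y⟩` when, for every `n`, the pair `(x, y)` lies in the equivalence relation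
*generated* by the `n`-th layer enumerated by `e`. Passing to generated equivalence relations makes
every layer an equivalence relation whatever `e` is, while it changes nothing when the layers are
already equivalence relations; so `x ↦ ⟨e, x⟩` reduces the relation coded by `e` to the universal
one. The generated layers remain c.e. uniformly in `n`: two points are related iff a finite path
whose edges have all been enumerated by some common stage joins them.
-/

open Nat.Partrec Code Relation Encodable Denumerable

theorem Partrec₂.exists_code_eval_pair {f : ℕ → ℕ →. ℕ} (hf : Partrec₂ f) :
    ∃ c : Code, ∀ n m, c.eval (Nat.pair n m) = f n m := by
  obtain ⟨c, hc⟩ := exists_code.1 (Partrec.nat_iff.1 (Partrec.comp hf Computable.unpair))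
  exact ⟨c, fun n m => by simp [hc]⟩

theorem REPred.exists_computable_mem_W_iff {p : ℕ → ℕ → Prop}
    (hp : REPred fun q : ℕ × ℕ => p q.1 q.2) :
    ∃ h : ℕ → ℕ, Computable h ∧ ∀ n m, m ∈ W (h n) ↔ p n m := by
  obtain ⟨c, hc⟩ := Partrec₂.exists_code_eval_pair
    (f := fun n m => (Part.assert (p n m) fun _ => Part.some ()).map fun _ => 0)
    (hp.map (Computable.const 0).to₂)
  refine ⟨fun n => encode (c.curry n),
    (Primrec.encode.comp (primrec₂_curry.comp (Primrec.const c) Primrec.id)).to_comp,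
    fun n m => ?_⟩
  simp [W, eval_curry, hc, Part.assert]

theorem Computable.exists_mem_W_pair_iff {h : ℕ → ℕ} (hh : Computable h) :
    ∃ e, ∀ n m, Nat.pair n m ∈ W e ↔ m ∈ W (h n) := by
  obtain ⟨c, hc⟩ := Partrec₂.exists_code_eval_pair (f := fun n m => (ofNat Code (h n)).eval m)
    (eval_part.comp ((Computable.ofNat Code).comp (hh.comp Computable.fst)) Computable.snd)
  exact ⟨encode c, fun n m => by simp [W, hc]⟩

theorem PrimrecRel.rePred_exists {α : Type*} [Primcodable α] {R : α → ℕ → Prop}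
    (hR : PrimrecRel R) : REPred fun a => ∃ w, R a w := by
  obtain ⟨hdec, hR⟩ := hR
  let _ : DecidableRel R := fun a w => hdec (a, w)
  have hsearch : Partrec fun a => Nat.rfind fun w => Part.some (decide (R a w)) :=
    Partrec.rfind (Computable₂.partrec₂ hR.to_comp)
  refine hsearch.dom_re.of_eq fun a => Nat.rfind_dom.trans ?_
  simp

theorem mem_W_iff_exists_evaln {e m : ℕ} :
    m ∈ W e ↔ ∃ s, (evaln s (ofNat Code e) m).isSome := by
  simp only [W, Set.mem_ofPred_eq, Part.dom_iff_mem, evaln_complete, Option.mem_def,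
    Option.isSome_iff_exists]
  exact exists_comm

theorem primrecPred_evaln_isSome :
    PrimrecPred fun q : ℕ × ℕ × ℕ => (evaln q.1 (ofNat Code q.2.1) q.2.2).isSome :=
  Primrec.primrecPred <| (Primrec.option_isSome.comp <| primrec_evaln.comp <|
    (Primrec.fst.pair ((Primrec.ofNat Code).comp (Primrec.fst.comp Primrec.snd))).pair
      (Primrec.snd.comp Primrec.snd)).of_eq fun _ => Bool.decide_eq_true.symm

theorem Nat.Partrec.Code.evaln_isSome_mono (c : Code) (n : ℕ) :
    Monotone fun s => (evaln s c n).isSome = true := fun s t hst h => by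
  obtain ⟨x, hx⟩ := Option.isSome_iff_exists.1 h
  exact Option.isSome_iff_exists.2 ⟨x, evaln_mono hst hx⟩

namespace List

variable {α : Type*}

theorem IsChain.exists_of_monotone {r : ℕ → α → α → Prop}
    (hr : ∀ a b, Monotone (r · a b)) :
    ∀ {l : List α}, l.IsChain (fun a b => ∃ s, r s a b) → ∃ s, l.IsChain (r s)
  | [], _ => ⟨0, .nil⟩
  | [a], _ => ⟨0, .singleton a⟩
  | a :: b :: l, h => by
    rw [isChain_cons_cons] at h
    obtain ⟨⟨s, hs⟩, hl⟩ := h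
    obtain ⟨t, ht⟩ := exists_of_monotone hr hl
    exact ⟨max s t, .cons_cons (hr a b (le_max_left s t) hs)
      (ht.imp fun c d => hr c d (le_max_right s t))⟩

theorem isChain_cons_iff_getI [Inhabited α] {r : α → α → Prop} {a : α} {l : List α} :
    (a :: l).IsChain r ↔ ∀ i < l.length, r ((a :: l).getI i) (l.getI i) := by
  simp only [isChain_iff_getElem, length_cons, Nat.add_lt_add_iff_right, getElem_cons_succ]
  refine forall_congr' fun i => ⟨fun h hi => ?_, fun h hi => ?_⟩ <;>
    simpa [getI_eq_getElem _ hi,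
      getI_eq_getElem (a :: l) (Nat.lt_succ_of_lt hi : i < (a :: l).length)] using h hi

theorem getLast_cons_eq_getI [Inhabited α] {a : α} {l : List α} :
    (a :: l).getLast (cons_ne_nil a l) = (a :: l).getI l.length := by
  rw [getLast_eq_getElem, getI_eq_getElem _ (by simp)]
  simp

end List

theorem Relation.reflTransGen_exists_iff {α : Type*} {r : ℕ → α → α → Prop}
    (hr : ∀ a b, Monotone (r · a b)) {a b : α} :
    ReflTransGen (fun a b => ∃ s, r s a b) a b ↔
      ∃ s l, (a :: l).IsChain (r s) ∧ (a :: l).getLast (List.cons_ne_nil a l) = b := by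
  constructor
  · intro h
    obtain ⟨l, hl, hlast⟩ := List.exists_isChain_cons_of_relationReflTransGen h
    obtain ⟨s, hs⟩ := hl.exists_of_monotone hr
    exact ⟨s, l, hs, hlast⟩
  · rintro ⟨s, l, hl, hlast⟩
    exact List.relationReflTransGen_of_exists_isChain_cons l (hl.imp fun _ _ h => ⟨s, h⟩) hlast

theorem Relation.eqvGen_exists_iff {α : Type*} {r : ℕ → α → α → Prop}
    (hr : ∀ a b, Monotone (r · a b)) {a b : α} :
    EqvGen (fun a b => ∃ s, r s a b) a b ↔
      ∃ s l, (a :: l).IsChain (SymmGen (r s)) ∧ (a :: l).getLast (List.cons_ne_nil a l) = b := by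
  have hsymm : SymmGen (fun a b => ∃ s, r s a b) = fun a b => ∃ s, SymmGen (r s) a b := by
    ext; simp only [SymmGen, exists_or]
  rw [← EqvGen.reflTransGen_symmGen, hsymm]
  exact reflTransGen_exists_iff fun a b s t hst => Or.imp (hr a b hst) (hr b a hst)

theorem PrimrecPred.isChain_cons_getLast {α β : Type*} [Primcodable α] [Primcodable β]
    [Inhabited α] {r : β → α → α → Prop}
    (hr : PrimrecPred fun q : β × α × α => r q.1 q.2.1 q.2.2) :
    PrimrecPred fun q : β × α × List α × α => (q.2.1 :: q.2.2.1).IsChain (r q.1) ∧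
      (q.2.1 :: q.2.2.1).getLast (List.cons_ne_nil _ _) = q.2.2.2 := by
  have hpath : Primrec fun q : β × α × List α × α => q.2.1 :: q.2.2.1 :=
    Primrec.list_cons.comp (Primrec.fst.comp Primrec.snd)
      (Primrec.fst.comp (Primrec.snd.comp Primrec.snd))
  have hl : Primrec fun q : β × α × List α × α => q.2.2.1 :=
    Primrec.fst.comp (Primrec.snd.comp Primrec.snd)
  have hstep : PrimrecRel fun (i : ℕ) (q : β × α × List α × α) =>
      r q.1 ((q.2.1 :: q.2.2.1).getI i) (q.2.2.1.getI i) :=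
    hr.comp <| (Primrec.fst.comp Primrec.snd).pair <|
      (Primrec.list_getI.comp (hpath.comp Primrec.snd) Primrec.fst).pair
        (Primrec.list_getI.comp (hl.comp Primrec.snd) Primrec.fst)
  refine ((hstep.forall_mem_list.comp (Primrec.list_range.comp (Primrec.list_length.comp hl))
      Primrec.id).and
    (Primrec.eq.comp (Primrec.list_getI.comp hpath (Primrec.list_length.comp hl))
      (Primrec.snd.comp (Primrec.snd.comp Primrec.snd)))).of_eq fun q => ?_
  simp only [List.mem_range, List.isChain_cons_iff_getI, List.getLast_cons_eq_getI, id]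

def UniversalLayer (n u v : ℕ) : Prop :=
  u.unpair.1 = v.unpair.1 ∧
    EqvGen (fun a b => Nat.pair n (Nat.pair a b) ∈ W u.unpair.1) u.unpair.2 v.unpair.2

def Universal (u v : ℕ) : Prop := ∀ n, UniversalLayer n u v

theorem universalLayer_equivalence (n : ℕ) : Equivalence (UniversalLayer n) where
  refl _ := ⟨rfl, EqvGen.refl _⟩
  symm := fun ⟨he, h⟩ => ⟨he.symm, he ▸ (EqvGen.is_equivalence _).symm h⟩
  trans := fun ⟨he, h⟩ ⟨he', h'⟩ => ⟨he.trans he', (EqvGen.is_equivalence _).trans h (he ▸ h')⟩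

theorem universal_equivalence : Equivalence Universal where
  refl u n := (universalLayer_equivalence n).refl u
  symm h n := (universalLayer_equivalence n).symm (h n)
  trans h h' n := (universalLayer_equivalence n).trans (h n) (h' n)

def StageEdge (s e n a b : ℕ) : Prop :=
  (evaln s (ofNat Code e) (Nat.pair n (Nat.pair a b))).isSome

theorem universalLayer_iff {n u v : ℕ} :
    UniversalLayer n u v ↔ u.unpair.1 = v.unpair.1 ∧ ∃ s l,
      (u.unpair.2 :: l).IsChain (SymmGen (StageEdge s u.unpair.1 n)) ∧
      (u.unpair.2 :: l).getLast (List.cons_ne_nil _ _) = v.unpair.2 := by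
  simp only [UniversalLayer, mem_W_iff_exists_evaln]
  exact and_congr_right fun _ => eqvGen_exists_iff fun a b => evaln_isSome_mono _ _

theorem primrecPred_symmGen_stageEdge :
    PrimrecPred fun q : (ℕ × ℕ × ℕ) × ℕ × ℕ =>
      SymmGen (StageEdge q.1.1 q.1.2.1 q.1.2.2) q.2.1 q.2.2 := by
  have hedge (a b : (ℕ × ℕ × ℕ) × ℕ × ℕ → ℕ) (ha : Primrec a) (hb : Primrec b) :
      PrimrecPred fun q : (ℕ × ℕ × ℕ) × ℕ × ℕ => StageEdge q.1.1 q.1.2.1 q.1.2.2 (a q) (b q) :=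
    primrecPred_evaln_isSome.comp <| (Primrec.fst.comp Primrec.fst).pair <|
      (Primrec.fst.comp (Primrec.snd.comp Primrec.fst)).pair <|
        Primrec₂.natPair.comp (Primrec.snd.comp (Primrec.snd.comp Primrec.fst))
          (Primrec₂.natPair.comp ha hb)
  exact (hedge _ _ (Primrec.fst.comp Primrec.snd) (Primrec.snd.comp Primrec.snd)).or
    (hedge _ _ (Primrec.snd.comp Primrec.snd) (Primrec.fst.comp Primrec.snd))

theorem rePred_universalLayer :
    REPred fun q : ℕ × ℕ => UniversalLayer q.1 q.2.unpair.1 q.2.unpair.2 := by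
  have hu : Primrec fun p : (ℕ × ℕ) × ℕ => p.1.2.unpair.1 :=
    Primrec.fst.comp (Primrec.unpair.comp (Primrec.snd.comp Primrec.fst))
  have hv : Primrec fun p : (ℕ × ℕ) × ℕ => p.1.2.unpair.2 :=
    Primrec.snd.comp (Primrec.unpair.comp (Primrec.snd.comp Primrec.fst))
  have hw : Primrec fun p : (ℕ × ℕ) × ℕ => ofNat (ℕ × List ℕ) p.2 :=
    (Primrec.ofNat _).comp Primrec.snd
  have hR : PrimrecRel fun (q : ℕ × ℕ) (w : ℕ) =>
      q.2.unpair.1.unpair.1 = q.2.unpair.2.unpair.1 ∧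
      (q.2.unpair.1.unpair.2 :: (ofNat (ℕ × List ℕ) w).2).IsChain
        (SymmGen (StageEdge (ofNat (ℕ × List ℕ) w).1 q.2.unpair.1.unpair.1 q.1)) ∧
      (q.2.unpair.1.unpair.2 :: (ofNat (ℕ × List ℕ) w).2).getLast (List.cons_ne_nil _ _) =
        q.2.unpair.2.unpair.2 :=
    (Primrec.eq.comp (Primrec.fst.comp (Primrec.unpair.comp hu))
      (Primrec.fst.comp (Primrec.unpair.comp hv))).and <|
    (primrecPred_symmGen_stageEdge.isChain_cons_getLast
      (r := fun p => SymmGen (StageEdge p.1 p.2.1 p.2.2))).comp <|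
      ((Primrec.fst.comp hw).pair ((Primrec.fst.comp (Primrec.unpair.comp hu)).pair
        (Primrec.fst.comp Primrec.fst))).pair <|
      (Primrec.snd.comp (Primrec.unpair.comp hu)).pair <|
      (Primrec.snd.comp hw).pair (Primrec.snd.comp (Primrec.unpair.comp hv))
  refine hR.rePred_exists.of_eq fun q => ?_
  rw [universalLayer_iff]
  constructor
  · rintro ⟨w, he, hpath⟩
    exact ⟨he, _, _, hpath⟩
  · rintro ⟨he, s, l, hpath⟩
    exact ⟨encode (s, l), by simpa only [ofNat_encode] using ⟨he, hpath⟩⟩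

theorem effectivelyPi02_universal : EffectivelyPi02 Universal := by
  obtain ⟨h, hh, hW⟩ := REPred.exists_computable_mem_W_iff
    (p := fun n m => UniversalLayer n m.unpair.1 m.unpair.2) rePred_universalLayer
  have hlayer (n u v : ℕ) : Nat.pair u v ∈ W (h n) ↔ UniversalLayer n u v := by
    simpa only [Nat.unpair_pair] using hW n (Nat.pair u v)
  refine ⟨h, hh, fun n => ?_, fun u v => forall_congr' fun n => (hlayer n u v).symm⟩
  simpa only [hlayer] using universalLayer_equivalence n

theorem EffectivelyPi02.computablyReducible_universal {E : ℕ → ℕ → Prop}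
    (hE : EffectivelyPi02 E) : ComputablyReducible E Universal := by
  obtain ⟨h, hh, hequiv, hE⟩ := hE
  obtain ⟨e, he⟩ := hh.exists_mem_W_pair_iff
  refine ⟨Nat.pair e, (Primrec₂.natPair.comp (Primrec.const e) Primrec.id).to_comp,
    fun x y => (hE x y).trans <| forall_congr' fun n => ?_⟩
  simp only [UniversalLayer, Nat.unpair_pair, he, true_and]
  exact (hequiv n).eqvGen_iff.symm

/-- There is an effectively Π⁰₂ equivalence relation to which every
effectively Π⁰₂ equivalence relation is computably reducible. -/
theorem stmt_10 :
    ∃ U : ℕ → ℕ → Prop, Equivalence U ∧ EffectivelyPi02 U ∧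
      ∀ E : ℕ → ℕ → Prop, Equivalence E → EffectivelyPi02 E →
        ComputablyReducible E U :=
  ⟨Universal, universal_equivalence, effectivelyPi02_universal,
    fun _ _ hE => hE.computablyReducible_universal⟩
end

section
/- Let A ⊆ ℕ be a recursively enumerable set that is not computable, and let U, V ⊆ ℕ be disjoint Σ⁰₃ sets. Then there are total computable functions a, b : ℕ → ℕ such that for every x: W_{a x} ∪ W_{b x} = A and W_{a x} ∩ W_{b x} = ∅ (an r.e. splitting of A), and moreover if x ∈ U then W_{a x} is computable, and if x ∈ V then W_{b x} is computable. -/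
/-- A set of naturals is Σ⁰₃. -/
def Sigma03Set (U : Set ℕ) : Prop :=
  ∃ M : ℕ → ℕ → ℕ → ℕ → Bool,
    Computable (fun p : ℕ × ℕ × ℕ × ℕ => M p.1 p.2.1 p.2.2.1 p.2.2.2) ∧
    ∀ x, x ∈ U ↔ ∃ a, ∀ b, ∃ c, M x a b c = true

/-!
Merge the Σ⁰₃ descriptions of `U` and `V` into one list of Π⁰₂ guesses about `x`: even guesses
are witnesses for `x ∈ U`, odd ones for `x ∈ V`. A Π⁰₂ guess `∀ b, ∃ c, M b c` is approximated at
stage `s` by its length of agreement, which is unbounded if the guess is true and bounded if it is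
false. When `z` is enumerated into `A` at stage `t`, it is handed to its controller, the least
guess `j < t` whose length at `t` exceeds `z`, and it goes to the right half if `j` is even and
to the left half if `j` is odd.

If `x ∈ U`, the least true guess `i` is even (an odd true guess would put `x` in `V`). The guesses
below `i` have lengths bounded by some `B`, so every `z ≥ B` enumerated after the first stage at
which the length of `i` exceeds `z` goes to the right half. Hence membership of `z ≥ B` in the left
half is decided by a finite search, and the left half is computable; symmetrically for `V`. The
construction is uniform in `x`, so the s-m-n theorem yields computable indices.
-/

open Nat.Partrec Code Encodable Computable

section Computability

variable {α : Type*} [Primcodable α]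

theorem ComputablePred.comp {β : Type*} [Primcodable β] {p : α → Prop} {f : β → α}
    (hp : ComputablePred p) (hf : Computable f) : ComputablePred fun b => p (f b) := by
  classical
  exact Computable.computablePred (hp.decide.comp hf)

theorem ComputablePred.or {p q : α → Prop} (hp : ComputablePred p) (hq : ComputablePred q) :
    ComputablePred fun a => p a ∨ q a := by
  classical
  exact Computable.computablePred ((Primrec.or.to_comp.comp hp.decide hq.decide).of_eq
    fun a => by simp)

theorem ComputablePred.and {p q : α → Prop} (hp : ComputablePred p) (hq : ComputablePred q) :
    ComputablePred fun a => p a ∧ q a := by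
  classical
  exact Computable.computablePred ((Primrec.and.to_comp.comp hp.decide hq.decide).of_eq
    fun a => by simp)

theorem Computable.computablePred_eq {β : Type*} [Primcodable β] [DecidableEq β] {f g : α → β}
    (hf : Computable f) (hg : Computable g) : ComputablePred fun a => f a = g a :=
  (Primrec.eq.decide.to_comp.comp hf hg).computablePred

theorem Computable.computablePred_lt {f g : α → ℕ} (hf : Computable f) (hg : Computable g) :
    ComputablePred fun a => f a < g a :=
  (Primrec.nat_lt.decide.to_comp.comp hf hg).computablePred

theorem ComputablePred.exists_lt {p : α → ℕ → Prop} {f : α → ℕ}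
    (hp : ComputablePred fun q : α × ℕ => p q.1 q.2) (hf : Computable f) :
    ComputablePred fun a => ∃ n < f a, p a n := by
  classical
  have hfind := Computable.find (P := fun a n => n = f a ∨ p a n)
    ((snd.computablePred_eq (hf.comp fst)).or hp) fun a => ⟨f a, Or.inl rfl⟩
  refine (hfind.computablePred_lt hf).of_eq fun a => ?_
  rw [Nat.find_lt_iff]
  exact exists_congr fun n => and_congr_right fun hn => or_iff_right hn.ne

theorem ComputablePred.rePred_exists {p : α → ℕ → Prop}
    (hp : ComputablePred fun q : α × ℕ => p q.1 q.2) : REPred fun a => ∃ n, p a n := by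
  classical
  have hsearch : Partrec fun a => Nat.rfind fun n => Part.some (decide (p a n)) :=
    Partrec.rfind hp.decide.to₂.partrec₂
  exact hsearch.dom_re.of_eq fun a => Nat.rfind_dom.trans (by simp)

theorem ComputablePred.of_forall_le_iff {p q : ℕ → Prop} (hq : ComputablePred q) (B : ℕ)
    (h : ∀ n, B ≤ n → (p n ↔ q n)) : ComputablePred p := by
  classical
  let l := (List.range B).map fun n => decide (p n)
  have hl : Computable fun n => l[n]?.getD false :=
    (list_getElem?.comp (const l) Computable.id).option_getD (const false)
  refine Computable.computablePred ((Computable.cond (Primrec.nat_lt.decide.to_comp.comp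
    Computable.id (const B)) hl hq.decide).of_eq fun n => ?_)
  by_cases hn : n < B
  · simp [l, hn]
  · simp [hn, h n (not_lt.1 hn)]

theorem REPred.exists_code {p : α → Prop} (hp : REPred p) :
    ∃ c : Code, ∀ a, (eval c (encode a)).Dom ↔ p a := by
  obtain ⟨c, hc⟩ := Code.exists_code.1 hp
  refine ⟨c, fun a => ?_⟩
  simp only [hc, encodek, Part.coe_some, Part.bind_some, Part.map_Dom]
  exact ⟨fun ⟨h, _⟩ => h, fun h => ⟨h, trivial⟩⟩

end Computability

theorem exists_computable_W_eq {R : ℕ → ℕ → Prop} (hR : REPred fun q : ℕ × ℕ => R q.1 q.2) :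
    ∃ f : ℕ → ℕ, Computable f ∧ ∀ x, W (f x) = {z | R x z} := by
  obtain ⟨c, hc⟩ := hR.exists_code
  refine ⟨fun x => encode (curry c x),
    (Primrec.encode.comp (primrec₂_curry.comp (Primrec.const c) Primrec.id)).to_comp,
    fun x => Set.ext fun z => ?_⟩
  simpa [W, eval_curry] using hc (x, z)

theorem REPred.exists_unique_stage_enumeration {p : ℕ → Prop} (hp : REPred p) :
    ∃ e : ℕ → ℕ → Prop, ComputablePred (fun q : ℕ × ℕ => e q.1 q.2) ∧
      (∀ z, p z ↔ ∃ t, e t z) ∧ ∀ z t t', e t z → e t' z → t = t' := by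
  obtain ⟨c, hc⟩ := hp.exists_code
  let halts (t z : ℕ) : Prop := (evaln t c z).isSome = true
  have hhalts : ComputablePred fun q : ℕ × ℕ => halts q.1 q.2 :=
    (Primrec.option_isSome.to_comp.comp (primrec_evaln.to_comp.comp
      ((fst.pair (const c)).pair snd))).computablePred_eq (const true)
  have hp_iff : ∀ z, p z ↔ ∃ t, halts t z := fun z => by
    rw [← hc z, Part.dom_iff_mem]
    simp only [Encodable.encode_nat, evaln_complete, halts, Option.isSome_iff_exists]
    exact exists_comm
  refine ⟨fun t z => halts t z ∧ ¬ ∃ t' < t, halts t' z, ?_, fun z => ?_, ?_⟩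
  · exact hhalts.and (ComputablePred.exists_lt (p := fun q t' => halts t' q.2)
      (hhalts.comp (snd.pair (snd.comp fst))) fst).not
  · rw [hp_iff]
    refine ⟨fun h => ⟨Nat.find h, Nat.find_spec h, fun ⟨t, ht, hz⟩ => Nat.find_min h ht hz⟩, ?_⟩
    rintro ⟨t, ht, -⟩
    exact ⟨t, ht⟩
  · rintro z t t' ⟨ht, hmin⟩ ⟨ht', hmin'⟩
    by_contra hne
    rcases Nat.lt_or_gt_of_ne hne with hlt | hlt
    exacts [hmin' ⟨t, hlt, ht⟩, hmin ⟨t', hlt, ht'⟩]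

namespace RESplitting

def agreementLength (M : ℕ → ℕ → Bool) (s : ℕ) : ℕ :=
  Nat.find (⟨s, Or.inl rfl⟩ : ∃ b, b = s ∨ ∀ c < s, M b c = false)

theorem lt_agreementLength_iff {M : ℕ → ℕ → Bool} {s n : ℕ} :
    n < agreementLength M s ↔ n < s ∧ ∀ b ≤ n, ∃ c < s, M b c = true := by
  simp only [agreementLength, Nat.lt_find_iff, not_or, not_forall, Bool.not_eq_false, exists_prop]
  refine ⟨fun h => ⟨?_, fun b hb => (h b hb).2⟩, fun h b hb => ⟨by omega, h.2 b hb⟩⟩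
  by_contra hs
  exact (h s (not_lt.1 hs)).1 rfl

theorem agreementLength_mono (M : ℕ → ℕ → Bool) : Monotone (agreementLength M) := by
  intro s s' hs
  refine le_of_forall_lt fun n hn => ?_
  obtain ⟨hns, hn⟩ := lt_agreementLength_iff.1 hn
  exact lt_agreementLength_iff.2
    ⟨hns.trans_le hs, fun b hb => (hn b hb).imp fun c hc => ⟨hc.1.trans_le hs, hc.2⟩⟩

theorem agreementLength_le_of_forall_false {M : ℕ → ℕ → Bool} {b : ℕ} (hb : ∀ c, M b c = false)
    (s : ℕ) : agreementLength M s ≤ b :=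
  Nat.find_min' _ (Or.inr fun c _ => hb c)

theorem exists_lt_agreementLength {M : ℕ → ℕ → Bool} (hM : ∀ b, ∃ c, M b c = true) (n : ℕ) :
    ∃ s, n < agreementLength M s := by
  choose w hw using hM
  let s := (Finset.range (n + 1)).sup (w · + 1) + n + 1
  have hw_lt : ∀ b ≤ n, w b < s := fun b hb => by
    have := Finset.le_sup (f := (w · + 1)) (Finset.mem_range.2 (by omega : b < n + 1))
    omega
  exact ⟨s, lt_agreementLength_iff.2 ⟨by omega, fun b hb => ⟨w b, hw_lt b hb, hw b⟩⟩⟩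

theorem exists_agreementLength_le_of_lt {N : ℕ → ℕ → ℕ → Bool} {i : ℕ}
    (h : ∀ j < i, ¬ ∀ b, ∃ c, N j b c = true) : ∃ B, ∀ j < i, ∀ t, agreementLength (N j) t ≤ B := by
  have : ∀ j < i, ∃ b, ∀ c, N j b c = false := fun j hj => by simpa using h j hj
  choose! b hb using this
  exact ⟨(Finset.range i).sup b, fun j hj t =>
    (agreementLength_le_of_forall_false (hb j hj) t).trans (Finset.le_sup (Finset.mem_range.2 hj))⟩

/-- `j = t` is only a sentinel making the search total. -/
def controller (N : ℕ → ℕ → ℕ → Bool) (z t : ℕ) : ℕ :=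
  Nat.find (⟨t, Or.inl rfl⟩ : ∃ j, j = t ∨ z < agreementLength (N j) t)

theorem controller_eq {N : ℕ → ℕ → ℕ → Bool} {z t i : ℕ} (hi : i < t)
    (hz : z < agreementLength (N i) t) (hbelow : ∀ j < i, agreementLength (N j) t ≤ z) :
    controller N z t = i := by
  rw [controller, Nat.find_eq_iff]
  exact ⟨Or.inr hz, fun j hj => not_or.2 ⟨by omega, not_lt.2 (hbelow j hj)⟩⟩

def splitPart (e : ℕ → ℕ → Prop) (N : ℕ → ℕ → ℕ → Bool) (v : Bool) : Set ℕ :=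
  {z | ∃ t, e t z ∧ (controller N z t).bodd = v}

theorem splitPart_union (e : ℕ → ℕ → Prop) (N : ℕ → ℕ → ℕ → Bool) :
    splitPart e N true ∪ splitPart e N false = {z | ∃ t, e t z} := by
  ext z
  simp only [splitPart, Set.mem_union, Set.mem_ofPred_eq]
  refine ⟨?_, fun ⟨t, ht⟩ => ?_⟩
  · rintro (⟨t, ht, -⟩ | ⟨t, ht, -⟩) <;> exact ⟨t, ht⟩
  · cases h : (controller N z t).bodd
    exacts [Or.inr ⟨t, ht, h⟩, Or.inl ⟨t, ht, h⟩]

theorem splitPart_inter {e : ℕ → ℕ → Prop} (he : ∀ z t t', e t z → e t' z → t = t')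
    (N : ℕ → ℕ → ℕ → Bool) : splitPart e N true ∩ splitPart e N false = ∅ := by
  ext z
  simp only [splitPart, Set.mem_inter_iff, Set.mem_ofPred_eq, Set.mem_empty_iff_false, iff_false]
  rintro ⟨⟨t, ht, htrue⟩, ⟨t', ht', hfalse⟩⟩
  rw [he z t t' ht ht', hfalse] at htrue
  exact Bool.false_ne_true htrue

section Computability

variable {α : Type*} [Primcodable α]

theorem computable_agreementLength {M : α → ℕ → ℕ → Bool}
    (hM : Computable fun q : α × ℕ × ℕ => M q.1 q.2.1 q.2.2) :
    Computable₂ fun a s => agreementLength (M a) s := by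
  have hM' := hM.comp ((fst.comp (fst.comp fst)).pair ((snd.comp fst).pair snd) :
    Computable fun q : ((α × ℕ) × ℕ) × ℕ => (q.1.1.1, q.1.2, q.2))
  dsimp only at hM'
  have hfails : ComputablePred fun q : (α × ℕ) × ℕ => ∃ c < q.1.2, M q.1.1 q.2 c = true :=
    .exists_lt (hM'.computablePred_eq (const true)) (snd.comp fst)
  exact Computable.find (P := fun (q : α × ℕ) b => b = q.2 ∨ ∀ c < q.2, M q.1 b c = false)
    ((snd.computablePred_eq (snd.comp fst)).or (hfails.not.of_eq fun q => by simp))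
    fun q => ⟨q.2, Or.inl rfl⟩

theorem computable_controller {N : α → ℕ → ℕ → ℕ → Bool}
    (hN : Computable fun q : α × ℕ × ℕ × ℕ => N q.1 q.2.1 q.2.2.1 q.2.2.2) :
    Computable fun q : α × ℕ × ℕ => controller (N q.1) q.2.1 q.2.2 := by
  have hlen := (computable_agreementLength (M := fun p : α × ℕ => N p.1 p.2)
    (hN.comp ((fst.comp fst).pair ((snd.comp fst).pair snd)))).comp
      (Computable.pair (fst.comp fst) snd : Computable fun q : (α × ℕ × ℕ) × ℕ => (q.1.1, q.2))
      (snd.comp (snd.comp fst))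
  dsimp only at hlen
  exact Computable.find
    (P := fun (q : α × ℕ × ℕ) j => j = q.2.2 ∨ q.2.1 < agreementLength (N q.1 j) q.2.2)
    ((snd.computablePred_eq (snd.comp (snd.comp fst))).or
      ((fst.comp (snd.comp fst)).computablePred_lt hlen))
    fun q => ⟨q.2.2, Or.inl rfl⟩

theorem rePred_mem_splitPart {e : ℕ → ℕ → Prop} (he : ComputablePred fun q : ℕ × ℕ => e q.1 q.2)
    {N : α → ℕ → ℕ → ℕ → Bool}
    (hN : Computable fun q : α × ℕ × ℕ × ℕ => N q.1 q.2.1 q.2.2.1 q.2.2.2) (v : Bool) :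
    REPred fun q : α × ℕ => q.2 ∈ splitPart e (N q.1) v := by
  have hctrl := (computable_controller hN).comp
    (Computable.pair (fst.comp fst) ((snd.comp fst).pair snd) :
      Computable fun q : (α × ℕ) × ℕ => (q.1.1, q.1.2, q.2))
  dsimp only at hctrl
  exact ComputablePred.rePred_exists ((he.comp (snd.pair (snd.comp fst))).and
    ((nat_bodd.comp hctrl).computablePred_eq (const v)))

end Computability

/-- Past a bound `B` and past stage `T z`, every `z` is controlled by the least true guess `i`,
so `z` lies in the half opposite to the parity of `i` iff it is enumerated before `T z`. -/
theorem computablePred_splitPart {e : ℕ → ℕ → Prop}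
    (he : ComputablePred fun q : ℕ × ℕ => e q.1 q.2) {N : ℕ → ℕ → ℕ → Bool}
    (hN : Computable fun q : ℕ × ℕ × ℕ => N q.1 q.2.1 q.2.2) {w : Bool}
    (hex : ∃ i, ∀ b, ∃ c, N i b c = true)
    (hpar : ∀ i, (∀ b, ∃ c, N i b c = true) → i.bodd = w) :
    ComputablePred (· ∈ splitPart e N !w) := by
  classical
  let i := Nat.find hex
  obtain ⟨B, hB⟩ := exists_agreementLength_le_of_lt fun j hj => Nat.find_min hex hj
  have hstage : ∀ z, ∃ t, i < t ∧ z < agreementLength (N i) t := fun z => by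
    obtain ⟨s, hs⟩ := exists_lt_agreementLength (Nat.find_spec hex) z
    exact ⟨max (i + 1) s, by omega, hs.trans_le (agreementLength_mono _ (le_max_right _ _))⟩
  let T z := Nat.find (hstage z)
  have hctrl : ∀ z t, B ≤ z → T z ≤ t → controller N z t = i := fun z t hz ht =>
    have ⟨hit, hzt⟩ := Nat.find_spec (hstage z)
    controller_eq (hit.trans_le ht) (hzt.trans_le (agreementLength_mono _ ht)) fun j hj =>
      (hB j hj t).trans hz
  have hcontroller := (computable_controller (N := fun _ : Unit => N) (hN.comp snd)).comp
    ((const ()).pair Computable.id : Computable fun q : ℕ × ℕ => ((), q))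
  dsimp only at hcontroller
  have hlen := (computable_agreementLength (M := fun _ : Unit => N i)
    (hN.comp ((const i).pair snd))).comp (const ()) (snd : Computable fun q : ℕ × ℕ => q.2)
  have hT : Computable T :=
    Computable.find (((const i).computablePred_lt snd).and (fst.computablePred_lt hlen)) hstage
  refine ComputablePred.of_forall_le_iff
    (q := fun z => ∃ t < T z, e t z ∧ (controller N z t).bodd = !w) ?_ B ?_
  · exact ComputablePred.exists_lt ((he.comp (snd.pair fst)).and
      ((nat_bodd.comp hcontroller).computablePred_eq (const !w))) hT
  · intro z hz
    refine ⟨fun ⟨t, ht, hv⟩ => ⟨t, ?_, ht, hv⟩, fun ⟨t, _, ht, hv⟩ => ⟨t, ht, hv⟩⟩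
    by_contra hlate
    rw [hctrl z t hz (not_lt.1 hlate), hpar i (Nat.find_spec hex)] at hv
    cases w <;> simp at hv

/-- Guess `j` about `x` is the Π⁰₂ matrix of the Σ⁰₃ witness `j.div2` for `x ∈ U` (`j` even) or
for `x ∈ V` (`j` odd). -/
def guess (MU MV : ℕ → ℕ → ℕ → ℕ → Bool) (x j : ℕ) : ℕ → ℕ → Bool :=
  bif j.bodd then MV x j.div2 else MU x j.div2

section Guess

variable {MU MV : ℕ → ℕ → ℕ → ℕ → Bool}

theorem computable_guess (hMU : Computable fun q : ℕ × ℕ × ℕ × ℕ => MU q.1 q.2.1 q.2.2.1 q.2.2.2)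
    (hMV : Computable fun q : ℕ × ℕ × ℕ × ℕ => MV q.1 q.2.1 q.2.2.1 q.2.2.2) :
    Computable fun q : ℕ × ℕ × ℕ × ℕ => guess MU MV q.1 q.2.1 q.2.2.1 q.2.2.2 := by
  have hargs : Computable fun q : ℕ × ℕ × ℕ × ℕ => (q.1, q.2.1.div2, q.2.2) :=
    fst.pair ((nat_div2.comp (fst.comp snd)).pair (snd.comp snd))
  refine (Computable.cond (nat_bodd.comp (fst.comp snd)) (hMV.comp hargs) (hMU.comp hargs)).of_eq
    fun q => ?_
  unfold guess
  cases q.2.1.bodd <;> rfl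

theorem exists_guess_iff {x : ℕ} (w : Bool) :
    (∃ j, j.bodd = w ∧ ∀ b, ∃ c, guess MU MV x j b c = true) ↔
      ∃ a, ∀ b, ∃ c, (bif w then MV else MU) x a b c = true := by
  constructor
  · rintro ⟨j, rfl, hj⟩
    refine ⟨j.div2, ?_⟩
    cases h : j.bodd <;> simpa [guess, h] using hj
  · rintro ⟨a, ha⟩
    refine ⟨Nat.bit w a, Nat.bodd_bit w a, ?_⟩
    cases w <;> simpa [guess] using ha

theorem computablePred_splitPart_guess {e : ℕ → ℕ → Prop}
    (he : ComputablePred fun q : ℕ × ℕ => e q.1 q.2)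
    (hMU : Computable fun q : ℕ × ℕ × ℕ × ℕ => MU q.1 q.2.1 q.2.2.1 q.2.2.2)
    (hMV : Computable fun q : ℕ × ℕ × ℕ × ℕ => MV q.1 q.2.1 q.2.2.1 q.2.2.2) {x : ℕ} {w : Bool}
    (hx : ∃ a, ∀ b, ∃ c, (bif w then MV else MU) x a b c = true)
    (hx' : ¬ ∃ a, ∀ b, ∃ c, (bif !w then MV else MU) x a b c = true) :
    ComputablePred (· ∈ splitPart e (guess MU MV x) !w) := by
  have hN := (computable_guess hMU hMV).comp
    ((const x).pair Computable.id : Computable fun q : ℕ × ℕ × ℕ => (x, q))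
  dsimp only at hN
  refine computablePred_splitPart he hN ?_ fun j hj => ?_
  · obtain ⟨j, -, hj⟩ := (exists_guess_iff w).2 hx
    exact ⟨j, hj⟩
  · by_contra hjw
    exact hx' ((exists_guess_iff !w).1 ⟨j, by cases w <;> simpa using hjw, hj⟩)

end Guess

end RESplitting

open RESplitting

theorem stmt_13_general (A : Set ℕ) (hAre : REPred (fun n => n ∈ A))
    (U V : Set ℕ) (hU : Sigma03Set U) (hV : Sigma03Set V) (hUV : U ∩ V = ∅) :
    ∃ a b : ℕ → ℕ, Computable a ∧ Computable b ∧
      ∀ x, (W (a x) ∪ W (b x) = A ∧ W (a x) ∩ W (b x) = ∅ ∧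
        (x ∈ U → ComputablePred (fun n => n ∈ W (a x))) ∧
        (x ∈ V → ComputablePred (fun n => n ∈ W (b x)))) := by
  obtain ⟨e, he, hA, hunique⟩ := hAre.exists_unique_stage_enumeration
  obtain ⟨MU, hMU, hUiff⟩ := hU
  obtain ⟨MV, hMV, hViff⟩ := hV
  have hN := computable_guess hMU hMV
  obtain ⟨a, ha, hWa⟩ := exists_computable_W_eq
    (R := fun x z => z ∈ splitPart e (guess MU MV x) true) (rePred_mem_splitPart he hN true)
  obtain ⟨b, hb, hWb⟩ := exists_computable_W_eq
    (R := fun x z => z ∈ splitPart e (guess MU MV x) false) (rePred_mem_splitPart he hN false)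
  have hUV' : ∀ x, x ∈ U → x ∉ V := fun x hxU hxV => (hUV ▸ ⟨hxU, hxV⟩ : x ∈ (∅ : Set ℕ))
  refine ⟨a, b, ha, hb, fun x => ?_⟩
  simp only [hWa, hWb, Set.ofPred_mem_eq]
  refine ⟨?_, splitPart_inter hunique _, fun hx => ?_, fun hx => ?_⟩
  · exact (splitPart_union e _).trans (Set.ext fun z => (hA z).symm)
  · exact computablePred_splitPart_guess (w := false) he hMU hMV ((hUiff x).1 hx)
      fun h => hUV' x hx ((hViff x).2 h)
  · exact computablePred_splitPart_guess (w := true) he hMU hMV ((hViff x).1 hx)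
      fun h => hUV' x ((hUiff x).2 h) hx

/-- Uniform r.e. splittings of a noncomputable r.e. set `A` whose left part is
computable on `U` and right part is computable on `V`, for a disjoint pair of
Σ⁰₃ sets `U, V`. -/
theorem stmt_13 (A : Set ℕ) (hAre : REPred (fun n => n ∈ A))
    (hAnc : ¬ ComputablePred (fun n => n ∈ A))
    (U V : Set ℕ) (hU : Sigma03Set U) (hV : Sigma03Set V) (hUV : U ∩ V = ∅) :
    ∃ a b : ℕ → ℕ, Computable a ∧ Computable b ∧
      ∀ x, (W (a x) ∪ W (b x) = A ∧ W (a x) ∩ W (b x) = ∅ ∧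
        (x ∈ U → ComputablePred (fun n => n ∈ W (a x))) ∧
        (x ∈ V → ComputablePred (fun n => n ∈ W (b x)))) :=
  stmt_13_general A hAre U V hU hV hUV
end
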